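/- arXiv:1708.03127 — 5 statements merged into one kernel-verified Lean document; each statement's English description precedes it below -/
import Mathlib

section
/- Let f : X → L̄⁰ be proper convex and σ_s-lower semi-continuous, and let F : L⁰(X) → L̄⁰ be its canonical extension, F(x) = sup_{V ∈ 𝒱(x)} inf { f_s(x̃) : x̃ ∈ V ∩ L⁰ₛ(X) } (a.e.-least-upper-bound sense). Then F is maximal among all extensions: for every G : L⁰(X) → L̄⁰ which is stable, L⁰-proper convex, σ_s-lower semi-continuous and satisfies G(x·1_Ω) = f(x) a.e. for every x ∈ X, one has G(x) ≤ F(x) a.e. for every x ∈ L⁰(X). -/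
open MeasureTheory Filter Set Function Topology

noncomputable section

section Defs

variable {Ω : Type*} [MeasurableSpace Ω] {X : Type*}

/-- `x : Ω → X` is a step function (countably-valued strongly measurable function),
i.e. it agrees `μ`-a.e. with `Σₖ xₖ 1_{Aₖ}` for a sequence `(xₖ)` in `X` and a countable
measurable partition `(Aₖ)` of `Ω`. -/
def IsStep (μ : Measure Ω) (x : Ω → X) : Prop :=
  ∃ (xs : ℕ → X) (A : ℕ → Set Ω), (∀ k, MeasurableSet (A k)) ∧
    Pairwise (Disjoint on A) ∧ (⋃ k, A k) = Set.univ ∧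
    ∀ᵐ ω ∂μ, ∀ k, ω ∈ A k → x ω = xs k

/-- `xt` is a step function and `g` is a version of its image `f_s(xt)` under the extension
of `f : X → L̄⁰` to step functions. -/
def StepPair (μ : Measure Ω) (f : X → Ω → EReal) (xt : Ω → X) (g : Ω → EReal) : Prop :=
  ∃ (xs : ℕ → X) (A : ℕ → Set Ω), (∀ k, MeasurableSet (A k)) ∧
    Pairwise (Disjoint on A) ∧ (⋃ k, A k) = Set.univ ∧
    ∀ᵐ ω ∂μ, ∀ k, ω ∈ A k → xt ω = xs k ∧ g ω = f (xs k) ω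

/-- `s` is a/the a.e. least upper bound (essential supremum) of the family `g`. -/
def IsAESup (μ : Measure Ω) {ι : Sort*} (g : ι → Ω → EReal) (s : Ω → EReal) : Prop :=
  Measurable s ∧ (∀ i, ∀ᵐ ω ∂μ, g i ω ≤ s ω) ∧
    ∀ h : Ω → EReal, Measurable h → (∀ i, ∀ᵐ ω ∂μ, g i ω ≤ h ω) → ∀ᵐ ω ∂μ, s ω ≤ h ω

/-- `s` is a/the a.e. greatest lower bound (essential infimum) of the family `g`. -/
def IsAEInf (μ : Measure Ω) {ι : Sort*} (g : ι → Ω → EReal) (s : Ω → EReal) : Prop :=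
  Measurable s ∧ (∀ i, ∀ᵐ ω ∂μ, s ω ≤ g i ω) ∧
    ∀ h : Ω → EReal, Measurable h → (∀ i, ∀ᵐ ω ∂μ, h ω ≤ g i ω) → ∀ᵐ ω ∂μ, h ω ≤ s ω

end Defs

/-- The weak topology `σ(X,Y)` on `X` induced by a bilinear pairing `B : X × Y → ℝ`,
i.e. the coarsest topology making all maps `x ↦ B x y`, `y ∈ Y`, continuous. -/
def weakTopol {X Y : Type*} [AddCommGroup X] [Module ℝ X] [AddCommGroup Y] [Module ℝ Y]
    (B : X →ₗ[ℝ] Y →ₗ[ℝ] ℝ) : TopologicalSpace X :=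
  TopologicalSpace.induced (fun x (y : Y) => B x y) Pi.topologicalSpace

section Nbhd

variable {Ω : Type*} [MeasurableSpace Ω]

/-- The parameters `(r, n, (yₘ))` of a basic stable neighborhood
`V(x; r, n, (yₘ))` in `L⁰(X)`. -/
structure NbhdParam (μ : Measure Ω) (Y : Type*) [NormedAddCommGroup Y] where
  r : Ω → ℝ
  r_meas : Measurable r
  r_pos : ∀ ω, 0 < r ω
  n : Ω → ℕ
  n_meas : Measurable n
  ys : ℕ → Ω → Y
  ys_meas : ∀ m, AEStronglyMeasurable (ys m) μ

end Nbhd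

section Stable

variable {Ω : Type*} [MeasurableSpace Ω]
variable {X Y : Type*} [NormedAddCommGroup X] [NormedSpace ℝ X]
  [NormedAddCommGroup Y] [NormedSpace ℝ Y]

/-- `xt` belongs to the basic stable neighborhood `V(x; r, n, (yₘ))` of `x`:
for `μ`-a.e. `ω`, `|⟨xt(ω) - x(ω), yₘ(ω)⟩| ≤ r(ω)` for all `1 ≤ m ≤ n(ω)`. -/
def NbhdParam.Mem (B : X →ₗ[ℝ] Y →ₗ[ℝ] ℝ) {μ : Measure Ω} (V : NbhdParam μ Y)
    (x xt : Ω → X) : Prop :=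
  ∀ᵐ ω ∂μ, ∀ m : ℕ, 1 ≤ m → m ≤ V.n ω → |B (xt ω - x ω) (V.ys m ω)| ≤ V.r ω

/-- σ_s-lower semi-continuity of `f : X → L̄⁰`:
`f(x) = sup_{V ∈ 𝒱(x)} inf { f_s(xt) : xt ∈ V ∩ L⁰ₛ(X) }` for every `x ∈ X`. -/
def SigmaSLsc (μ : Measure Ω) (B : X →ₗ[ℝ] Y →ₗ[ℝ] ℝ) (f : X → Ω → EReal) : Prop :=
  ∀ x : X, ∃ I : NbhdParam μ Y → Ω → EReal,
    (∀ V : NbhdParam μ Y,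
      IsAEInf μ (fun p : {p : (Ω → X) × (Ω → EReal) //
        StepPair μ f p.1 p.2 ∧ V.Mem B (fun _ => x) p.1} => p.1.2) (I V)) ∧
    IsAESup μ I (f x)

/-- σ_s-lower semi-continuity of `F : L⁰(X) → L̄⁰`:
`F(x) = sup_{V ∈ 𝒱(x)} inf { F(z) : z ∈ V }` for every `x ∈ L⁰(X)`. -/
def SigmaSLscL0 (μ : Measure Ω) (B : X →ₗ[ℝ] Y →ₗ[ℝ] ℝ)
    (F : (Ω → X) → Ω → EReal) : Prop :=
  ∀ x : Ω → X, AEStronglyMeasurable x μ → ∃ I : NbhdParam μ Y → Ω → EReal,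
    (∀ V : NbhdParam μ Y,
      IsAEInf μ
        (fun z : {z : Ω → X // AEStronglyMeasurable z μ ∧ V.Mem B x z} => F z.1) (I V)) ∧
    IsAESup μ I (F x)

/-- `F` satisfies the canonical-extension formula
`F(x) = sup_{V ∈ 𝒱(x)} inf { f_s(xt) : xt ∈ V ∩ L⁰ₛ(X) }` for every `x ∈ L⁰(X)`. -/
def IsCanonicalExt (μ : Measure Ω) (B : X →ₗ[ℝ] Y →ₗ[ℝ] ℝ)
    (f : X → Ω → EReal) (F : (Ω → X) → Ω → EReal) : Prop :=
  ∀ x : Ω → X, AEStronglyMeasurable x μ → ∃ I : NbhdParam μ Y → Ω → EReal,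
    (∀ V : NbhdParam μ Y,
      IsAEInf μ (fun p : {p : (Ω → X) × (Ω → EReal) //
        StepPair μ f p.1 p.2 ∧ V.Mem B x p.1} => p.1.2) (I V)) ∧
    IsAESup μ I (F x)

/-- Stability of `F : L⁰(X) → L̄⁰` under countable concatenations:
`F(Σₖ xₖ 1_{Aₖ}) = Σₖ F(xₖ) 1_{Aₖ}` a.e. -/
def StableFun (μ : Measure Ω) (F : (Ω → X) → Ω → EReal) : Prop :=
  ∀ (xs : ℕ → Ω → X) (A : ℕ → Set Ω) (x : Ω → X),
    (∀ k, AEStronglyMeasurable (xs k) μ) → (∀ k, MeasurableSet (A k)) →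
    Pairwise (Disjoint on A) → (⋃ k, A k) = Set.univ →
    (∀ᵐ ω ∂μ, ∀ k, ω ∈ A k → x ω = xs k ω) →
    ∀ᵐ ω ∂μ, ∀ k, ω ∈ A k → F x ω = F (xs k) ω

/-- `f : X → L̄⁰` is proper convex. -/
def ProperConvex (μ : Measure Ω) (f : X → Ω → EReal) : Prop :=
  (∀ x : X, ∀ᵐ ω ∂μ, f x ω ≠ ⊥) ∧
  (∃ x' : X, ∀ᵐ ω ∂μ, f x' ω ≠ ⊥ ∧ f x' ω ≠ ⊤) ∧
  ∀ (x xt : X) (l : ℝ), 0 ≤ l → l ≤ 1 →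
    ∀ᵐ ω ∂μ, f (l • x + (1 - l) • xt) ω ≤
      (l : EReal) * f x ω + ((1 - l : ℝ) : EReal) * f xt ω

/-- `F : L⁰(X) → L̄⁰` is L⁰-proper convex. -/
def L0ProperConvex (μ : Measure Ω) (F : (Ω → X) → Ω → EReal) : Prop :=
  (∀ x : Ω → X, AEStronglyMeasurable x μ → ∀ᵐ ω ∂μ, F x ω ≠ ⊥) ∧
  (∃ x' : Ω → X, AEStronglyMeasurable x' μ ∧ ∀ᵐ ω ∂μ, F x' ω ≠ ⊥ ∧ F x' ω ≠ ⊤) ∧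
  ∀ (x z : Ω → X) (l : Ω → ℝ), AEStronglyMeasurable x μ → AEStronglyMeasurable z μ →
    Measurable l → (∀ ω, 0 ≤ l ω ∧ l ω ≤ 1) →
    ∀ᵐ ω ∂μ, F (fun ω' => l ω' • x ω' + (1 - l ω') • z ω') ω ≤
      (l ω : EReal) * F x ω + ((1 - l ω : ℝ) : EReal) * F z ω

/-- `U ⊆ L⁰(X)` is open in the stable topology `σ_s(L⁰(X), L⁰(Y))`: for every `x ∈ U`
there is a basic stable neighborhood `V ∈ 𝒱(x)` with `V ⊆ U`. -/
def SigmaSOpen (μ : Measure Ω) (B : X →ₗ[ℝ] Y →ₗ[ℝ] ℝ)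
    (U : Set {x : Ω → X // AEStronglyMeasurable x μ}) : Prop :=
  ∀ x ∈ U, ∃ V : NbhdParam μ Y,
    ∀ z : {x : Ω → X // AEStronglyMeasurable x μ}, V.Mem B x.1 z.1 → z ∈ U

end Stable

/-! The canonical extension `F` and any σ_s-lower semi-continuous extension `G` are both
suprema over the same basic neighborhoods `V`.  For each `V`, every step function `x̃ ∈ V` is
itself a competitor in the infimum defining `G`, and stability together with `G = f` on
constants gives `G(x̃) = f_s(x̃)`; hence the `V`-infimum for `G` lies below the one for `F`,
and so do the suprema. -/

section AEBounds

variable {Ω : Type*} [MeasurableSpace Ω] {μ : Measure Ω}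

theorem IsAEInf.ae_le_of_forall_exists_ae_le {ι κ : Sort*} {g : ι → Ω → EReal}
    {h : κ → Ω → EReal} {s t : Ω → EReal} (hs : IsAEInf μ g s) (ht : IsAEInf μ h t)
    (H : ∀ j, ∃ i, g i ≤ᵐ[μ] h j) : s ≤ᵐ[μ] t :=
  ht.2.2 s hs.1 fun j =>
    let ⟨i, hij⟩ := H j
    EventuallyLE.trans (hs.2.1 i) hij

theorem IsAESup.ae_le_of_forall_ae_le {ι : Sort*} {g h : ι → Ω → EReal} {s t : Ω → EReal}
    (hs : IsAESup μ g s) (ht : IsAESup μ h t) (H : ∀ i, g i ≤ᵐ[μ] h i) : s ≤ᵐ[μ] t :=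
  hs.2.2 t ht.1 fun i => (H i).trans (ht.2.1 i)

end AEBounds

section Step

variable {Ω : Type*} [MeasurableSpace Ω] {μ : Measure Ω} {X : Type*}

theorem exists_measurable_index_mem {A : ℕ → Set Ω} (hA : ∀ k, MeasurableSet (A k))
    (hcover : (⋃ k, A k) = Set.univ) : ∃ k : Ω → ℕ, Measurable k ∧ ∀ ω, ω ∈ A (k ω) := by
  classical
  have hex : ∀ ω, ∃ k, ω ∈ A k := fun ω => Set.mem_iUnion.mp (hcover ▸ Set.mem_univ ω)
  exact ⟨fun ω => Nat.find (hex ω), measurable_find hex hA, fun ω => Nat.find_spec (hex ω)⟩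

theorem IsStep.aestronglyMeasurable [TopologicalSpace X] {x : Ω → X} (hx : IsStep μ x) :
    AEStronglyMeasurable x μ := by
  obtain ⟨xs, A, hA, -, hcover, hae⟩ := hx
  obtain ⟨k, hk, hkA⟩ := exists_measurable_index_mem hA hcover
  have hstep : StronglyMeasurable fun ω => xs (k ω) :=
    (StronglyMeasurable.of_discrete (f := xs)).comp_measurable hk
  refine hstep.aestronglyMeasurable.congr ?_
  filter_upwards [hae] with ω hω using (hω _ (hkA ω)).symm

theorem StepPair.isStep {f : X → Ω → EReal} {xt : Ω → X} {g : Ω → EReal}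
    (h : StepPair μ f xt g) : IsStep μ xt :=
  let ⟨xs, A, hA, hdisj, hcover, hae⟩ := h
  ⟨xs, A, hA, hdisj, hcover, by filter_upwards [hae] with ω hω k hk using (hω k hk).1⟩

end Step

theorem StableFun.ae_eq_of_stepPair {Ω : Type*} [MeasurableSpace Ω] {μ : Measure Ω}
    {X : Type*} [NormedAddCommGroup X] {G : (Ω → X) → Ω → EReal} (hG : StableFun μ G)
    {f : X → Ω → EReal} (hGf : ∀ x : X, G (fun _ => x) =ᵐ[μ] f x)
    {xt : Ω → X} {g : Ω → EReal} (h : StepPair μ f xt g) : G xt =ᵐ[μ] g := by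
  obtain ⟨xs, A, hA, hdisj, hcover, hae⟩ := h
  obtain ⟨k, -, hkA⟩ := exists_measurable_index_mem hA hcover
  have hpieces := hG (fun k _ => xs k) A xt (fun _ => aestronglyMeasurable_const) hA hdisj
    hcover (by filter_upwards [hae] with ω hω k hk using (hω k hk).1)
  filter_upwards [hpieces, ae_all_iff.mpr fun k => hGf (xs k), hae] with ω hGω hfω hω
  rw [hGω _ (hkA ω), hfω, (hω _ (hkA ω)).2]

theorem canonical_extension_maximal_general
    {Ω : Type*} [MeasurableSpace Ω] (μ : Measure Ω)
    {X Y : Type*} [NormedAddCommGroup X] [NormedSpace ℝ X]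
    [NormedAddCommGroup Y] [NormedSpace ℝ Y]
    (B : X →ₗ[ℝ] Y →ₗ[ℝ] ℝ)
    (f : X → Ω → EReal)
    (F : (Ω → X) → Ω → EReal) (hF : IsCanonicalExt μ B f F)
    (G : (Ω → X) → Ω → EReal)
    (hGstable : StableFun μ G)
    (hGlsc : SigmaSLscL0 μ B G)
    (hGext : ∀ x : X, G (fun _ => x) =ᵐ[μ] f x) :
    ∀ x : Ω → X, AEStronglyMeasurable x μ → ∀ᵐ ω ∂μ, G x ω ≤ F x ω := by
  intro x hx
  obtain ⟨IG, hIG_inf, hIG_sup⟩ := hGlsc x hx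
  obtain ⟨IF, hIF_inf, hIF_sup⟩ := hF x hx
  refine hIG_sup.ae_le_of_forall_ae_le hIF_sup fun V =>
    (hIG_inf V).ae_le_of_forall_exists_ae_le (hIF_inf V) ?_
  rintro ⟨⟨xt, g⟩, hstep, hmem⟩
  exact ⟨⟨xt, hstep.isStep.aestronglyMeasurable, hmem⟩,
    (hGstable.ae_eq_of_stepPair hGext hstep).le⟩

/-- **Maximality of the canonical extension.** If `f : X → L̄⁰` is proper convex and
σ_s-lower semi-continuous and `F` is its canonical extension to `L⁰(X)`, then
`G ≤ F` for every stable, `L⁰`-proper convex, σ_s-lower semi-continuous extension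
`G` of `f`. -/
theorem canonical_extension_maximal
    {Ω : Type*} [MeasurableSpace Ω] (μ : Measure Ω) [SigmaFinite μ]
    {X Y : Type*} [NormedAddCommGroup X] [NormedSpace ℝ X] [CompleteSpace X]
    [NormedAddCommGroup Y] [NormedSpace ℝ Y] [CompleteSpace Y]
    (B : X →ₗ[ℝ] Y →ₗ[ℝ] ℝ)
    (hB : ∀ (x : X) (y : Y), |B x y| ≤ ‖x‖ * ‖y‖)
    (hsepX : ∀ x : X, x ≠ 0 → ∃ y : Y, B x y ≠ 0)
    (hsepY : ∀ y : Y, y ≠ 0 → ∃ x : X, B x y ≠ 0)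
    (hballX : @IsClosed X (weakTopol B) {x : X | ‖x‖ ≤ 1})
    (hballY : @IsClosed Y (weakTopol B.flip) {y : Y | ‖y‖ ≤ 1})
    (f : X → Ω → EReal) (hf : ∀ x : X, Measurable (f x))
    (hpc : ProperConvex μ f) (hlsc : SigmaSLsc μ B f)
    (F : (Ω → X) → Ω → EReal) (hF : IsCanonicalExt μ B f F)
    (G : (Ω → X) → Ω → EReal)
    (hGstable : StableFun μ G) (hGpc : L0ProperConvex μ G)
    (hGlsc : SigmaSLscL0 μ B G)
    (hGext : ∀ x : X, G (fun _ => x) =ᵐ[μ] f x) :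
    ∀ x : Ω → X, AEStronglyMeasurable x μ → ∀ᵐ ω ∂μ, G x ω ≤ F x ω :=
  canonical_extension_maximal_general μ B f F hF G hGstable hGlsc hGext
end
end

section
/- For every x ∈ L⁰(X) with x(ω) ≠ 0 for μ-a.e. ω, there exists y ∈ L⁰(Y) such that ⟨x(ω), y(ω)⟩ ≠ 0 for μ-a.e. ω. Symmetrically, for every y ∈ L⁰(Y) with y(ω) ≠ 0 for μ-a.e. ω, there exists x ∈ L⁰(X) such that ⟨x(ω), y(ω)⟩ ≠ 0 for μ-a.e. ω. -/
open MeasureTheory Filter Set Function Topology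

noncomputable section

/-!
A strongly measurable `x` has separable, hence Lindelöf, range. The open sets
`{w | ⟨w, y⟩ ≠ 0}` cover the nonzero part of that range, so countably many `yₙ` suffice, and
`y ω := y_{n(ω)}`, with `n(ω)` the first index such that `⟨x ω, yₙ⟩ ≠ 0`, is measurable.
The second half is the first one for the flipped pairing.
-/

theorem TopologicalSpace.IsSeparable.isLindelof {X : Type*} [TopologicalSpace X]
    [TopologicalSpace.PseudoMetrizableSpace X] {s : Set X} (hs : TopologicalSpace.IsSeparable s) :
    IsLindelof s := by
  have := hs.secondCountableTopology
  simpa using (HereditarilyLindelofSpace.isLindelof (univ : Set s)).image continuous_subtype_val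

theorem IsLindelof.exists_seq_subcover {X ι : Type*} [TopologicalSpace X] [Nonempty ι]
    {s : Set X} (hs : IsLindelof s) (U : ι → Set X) (hUo : ∀ i, IsOpen (U i))
    (hsU : s ⊆ ⋃ i, U i) : ∃ t : ℕ → ι, s ⊆ ⋃ n, U (t n) := by
  obtain ⟨r, hr, hsr⟩ := hs.elim_countable_subcover U hUo hsU
  obtain ⟨t, ht⟩ := (hr.insert (Classical.arbitrary ι)).exists_eq_range (insert_nonempty _ _)
  refine ⟨t, hsr.trans <| iUnion₂_subset fun i hi => ?_⟩
  obtain ⟨n, rfl⟩ : i ∈ range t := ht ▸ mem_insert_of_mem _ hi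
  exact subset_iUnion (fun n => U (t n)) n

section Pairing

variable {X Y : Type*} [TopologicalSpace X] [Zero X] (C : X → Y → ℝ)

theorem exists_seq_pairing_ne_zero [TopologicalSpace.PseudoMetrizableSpace X] [Nonempty Y]
    (hC : ∀ y, Continuous fun w => C w y) (hsep : ∀ w : X, w ≠ 0 → ∃ y, C w y ≠ 0)
    {s : Set X} (hs : TopologicalSpace.IsSeparable s) :
    ∃ ys : ℕ → Y, ∀ w ∈ s, w ≠ 0 → ∃ n, C w (ys n) ≠ 0 := by
  obtain ⟨ys, hys⟩ := (hs.mono sdiff_subset).isLindelof.exists_seq_subcover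
    (fun y => {w | C w y ≠ 0}) (fun y => isOpen_ne_fun (hC y) continuous_const)
    fun w hw => mem_iUnion.2 (hsep w hw.2)
  exact ⟨ys, fun w hws hw0 => mem_iUnion.1 (hys ⟨hws, hw0⟩)⟩

theorem exists_aestronglyMeasurable_pairing_ne_zero [TopologicalSpace.PseudoMetrizableSpace X]
    [TopologicalSpace Y] [Nonempty Y] {Ω : Type*} [MeasurableSpace Ω] (μ : Measure Ω)
    (hC : ∀ y, Continuous fun w => C w y) (hsep : ∀ w : X, w ≠ 0 → ∃ y, C w y ≠ 0)
    (x : Ω → X) (hx : AEStronglyMeasurable x μ) (hx0 : ∀ᵐ ω ∂μ, x ω ≠ 0) :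
    ∃ y : Ω → Y, AEStronglyMeasurable y μ ∧ ∀ᵐ ω ∂μ, C (x ω) (y ω) ≠ 0 := by
  classical
  obtain ⟨x', hx'm, hxx'⟩ := hx
  obtain ⟨ys, hys⟩ := exists_seq_pairing_ne_zero C hC hsep hx'm.isSeparable_range
  -- The second disjunct makes the search total, so that `Nat.find` is defined everywhere.
  let p : Ω → ℕ → Prop := fun ω n => C (x' ω) (ys n) ≠ 0 ∨ ∀ m, C (x' ω) (ys m) = 0
  have hp : ∀ ω, ∃ n, p ω n := fun ω => by
    by_cases h : ∃ n, C (x' ω) (ys n) ≠ 0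
    · exact h.imp fun n => Or.inl
    · exact ⟨0, Or.inr fun m => not_not.1 (not_exists.1 h m)⟩
  have hZ : ∀ n, MeasurableSet {ω | C (x' ω) (ys n) = 0} := fun n =>
    ((hC (ys n)).comp_stronglyMeasurable hx'm).measurable (measurableSet_singleton 0)
  have hk : Measurable fun ω => Nat.find (hp ω) := by
    refine measurable_find hp fun n => ?_
    simp only [p, ofPred_or, ofPred_forall]
    exact (hZ n).compl.union (.iInter hZ)
  refine ⟨fun ω => ys (Nat.find (hp ω)),
    (StronglyMeasurable.of_discrete.comp_measurable hk).aestronglyMeasurable, ?_⟩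
  filter_upwards [hx0, hxx'] with ω hω0 hωx'
  rw [hωx'] at hω0 ⊢
  obtain ⟨n, hn⟩ := hys (x' ω) (mem_range_self ω) hω0
  exact (Nat.find_spec (hp ω)).resolve_right fun h => hn (h n)

end Pairing

theorem LinearMap.continuous_apply_left_of_abs_le {X Y : Type*} [SeminormedAddCommGroup X]
    [NormedSpace ℝ X] [AddCommGroup Y] [Module ℝ Y] [Norm Y] (B : X →ₗ[ℝ] Y →ₗ[ℝ] ℝ)
    (hB : ∀ x y, |B x y| ≤ ‖x‖ * ‖y‖) (y : Y) : Continuous fun x => B x y :=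
  AddMonoidHomClass.continuous_of_bound (B.flip y) ‖y‖ fun x => by
    simpa [mul_comm] using hB x y

theorem separation_L0_general
    {Ω : Type*} [MeasurableSpace Ω] (μ : Measure Ω)
    {X Y : Type*} [NormedAddCommGroup X] [NormedSpace ℝ X]
    [NormedAddCommGroup Y] [NormedSpace ℝ Y]
    (B : X →ₗ[ℝ] Y →ₗ[ℝ] ℝ)
    (hB : ∀ (x : X) (y : Y), |B x y| ≤ ‖x‖ * ‖y‖)
    (hsepX : ∀ x : X, x ≠ 0 → ∃ y : Y, B x y ≠ 0)
    (hsepY : ∀ y : Y, y ≠ 0 → ∃ x : X, B x y ≠ 0) :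
    (∀ x : Ω → X, AEStronglyMeasurable x μ → (∀ᵐ ω ∂μ, x ω ≠ 0) →
      ∃ y : Ω → Y, AEStronglyMeasurable y μ ∧ ∀ᵐ ω ∂μ, B (x ω) (y ω) ≠ 0) ∧
    (∀ y : Ω → Y, AEStronglyMeasurable y μ → (∀ᵐ ω ∂μ, y ω ≠ 0) →
      ∃ x : Ω → X, AEStronglyMeasurable x μ ∧ ∀ᵐ ω ∂μ, B (x ω) (y ω) ≠ 0) :=
  ⟨exists_aestronglyMeasurable_pairing_ne_zero (fun x y => B x y) μ
      (B.continuous_apply_left_of_abs_le hB) hsepX,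
    exists_aestronglyMeasurable_pairing_ne_zero (fun y x => B x y) μ
      (B.flip.continuous_apply_left_of_abs_le fun y x => by simpa [mul_comm] using hB x y) hsepY⟩

/-- **Lemma 3.1 (separation).** For every `x ∈ L⁰(X)` with `x ≠ 0` a.e. there exists
`y ∈ L⁰(Y)` with `⟨x,y⟩ ≠ 0` a.e., and symmetrically for `y ∈ L⁰(Y)`. -/
theorem separation_L0
    {Ω : Type*} [MeasurableSpace Ω] (μ : Measure Ω) [SigmaFinite μ]
    {X Y : Type*} [NormedAddCommGroup X] [NormedSpace ℝ X] [CompleteSpace X]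
    [NormedAddCommGroup Y] [NormedSpace ℝ Y] [CompleteSpace Y]
    (B : X →ₗ[ℝ] Y →ₗ[ℝ] ℝ)
    (hB : ∀ (x : X) (y : Y), |B x y| ≤ ‖x‖ * ‖y‖)
    (hsepX : ∀ x : X, x ≠ 0 → ∃ y : Y, B x y ≠ 0)
    (hsepY : ∀ y : Y, y ≠ 0 → ∃ x : X, B x y ≠ 0)
    (hballX : @IsClosed X (weakTopol B) {x : X | ‖x‖ ≤ 1})
    (hballY : @IsClosed Y (weakTopol B.flip) {y : Y | ‖y‖ ≤ 1}) :
    (∀ x : Ω → X, AEStronglyMeasurable x μ → (∀ᵐ ω ∂μ, x ω ≠ 0) →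
      ∃ y : Ω → Y, AEStronglyMeasurable y μ ∧ ∀ᵐ ω ∂μ, B (x ω) (y ω) ≠ 0) ∧
    (∀ y : Ω → Y, AEStronglyMeasurable y μ → (∀ᵐ ω ∂μ, y ω ≠ 0) →
      ∃ x : Ω → X, AEStronglyMeasurable x μ ∧ ∀ᵐ ω ∂μ, B (x ω) (y ω) ≠ 0) :=
  separation_L0_general μ B hB hsepX hsepY
end
end

section
/- Let (Ω, 𝓕, μ) be a σ-finite measure space, I a nonempty set, and (fᵢ)_{i∈I} a family of measurable functions Ω → [−∞,∞]. Then there exists a measurable function g : Ω → [−∞,∞] which is a least upper bound of the family with respect to the a.e. order: fᵢ ≤ g μ-a.e. for every i ∈ I, and for every measurable h : Ω → [−∞,∞] with fᵢ ≤ h μ-a.e. for every i ∈ I one has g ≤ h μ-a.e. (In other words, every nonempty subset of the space L̄⁰ of measurable [−∞,∞]-valued functions modulo a.e. equality has a least upper bound, the essential supremum, with respect to the a.e. order.) -/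
/-!
Fix a finite measure `ν` with `μ ≪ ν` and a bounded strictly increasing `φ : [-∞,∞] → [0,1]`.
Among the countable subfamilies `S`, choose one maximizing `∫ φ (sup_{j ∈ S} f j) dν`; the
maximum is attained because countable unions of countable sets are countable. Adding any `f i` to
a maximizing `S` cannot increase the integral, so it leaves the supremum unchanged a.e., i.e.
`f i ≤ sup_{j ∈ S} f j` a.e. Being a countable supremum, `sup_{j ∈ S} f j` is measurable and lies
a.e. below every a.e. upper bound of the family.
-/

open MeasureTheory Filter Set Function Topology

noncomputable section

open scoped ENNReal

theorem EReal.exists_strictMono_measurable_le_one :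
    ∃ φ : EReal → ℝ≥0∞, StrictMono φ ∧ Measurable φ ∧ ∀ x, φ x ≤ 1 := by
  have hφ : StrictMono fun x => (ENNReal.orderIsoIicOneBirational (EReal.exp x) : ℝ≥0∞) :=
    fun _ _ hxy => Subtype.coe_lt_coe.2
      (ENNReal.orderIsoIicOneBirational.strictMono (EReal.exp_strictMono hxy))
  exact ⟨_, hφ, hφ.monotone.measurable, fun x => (ENNReal.orderIsoIicOneBirational _).2⟩

theorem Monotone.exists_countable_forall_le {ι α : Type*} [ConditionallyCompleteLinearOrder α]
    [TopologicalSpace α] [OrderTopology α] [FirstCountableTopology α] {D : Set ι → α}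
    (hD : Monotone D) (hbdd : BddAbove (D '' {S | S.Countable})) :
    ∃ S : Set ι, S.Countable ∧ ∀ T : Set ι, T.Countable → D T ≤ D S := by
  obtain ⟨u, -, hu_lim, hu_mem⟩ :=
    exists_seq_tendsto_sSup (Set.image_nonempty.2 ⟨∅, countable_empty⟩) hbdd
  choose S hS_count hS_eq using hu_mem
  refine ⟨⋃ n, S n, countable_iUnion hS_count, fun T hT => ?_⟩
  calc D T ≤ sSup (D '' {S | S.Countable}) := le_csSup hbdd ⟨T, hT, rfl⟩
    _ ≤ D (⋃ n, S n) :=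
      le_of_tendsto' hu_lim fun n => hS_eq n ▸ hD (subset_iUnion S n)

theorem exists_countable_ae_le_biSup {Ω ι : Type*} [MeasurableSpace Ω] (ν : Measure Ω)
    [IsFiniteMeasure ν] (f : ι → Ω → EReal) (hf : ∀ i, Measurable (f i)) :
    ∃ S : Set ι, S.Countable ∧ ∀ i, ∀ᵐ ω ∂ν, f i ω ≤ ⨆ j ∈ S, f j ω := by
  obtain ⟨φ, hφ_mono, hφ_meas, hφ_le⟩ := EReal.exists_strictMono_measurable_le_one
  set D : Set ι → ℝ≥0∞ := fun S => ∫⁻ ω, φ (⨆ j ∈ S, f j ω) ∂ν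
  have hD : Monotone D := fun S T hST =>
    lintegral_mono fun ω => hφ_mono.monotone (biSup_mono hST)
  obtain ⟨S, hS, hS_max⟩ := hD.exists_countable_forall_le (OrderTop.bddAbove _)
  refine ⟨S, hS, fun i => ?_⟩
  have hD_fin : D S ≠ ∞ :=
    ne_top_of_le_ne_top (lintegral_const_lt_top (μ := ν) ENNReal.one_ne_top).ne
      (lintegral_mono fun ω => hφ_le _)
  have h_insert : ∀ᵐ ω ∂ν, φ (⨆ j ∈ S, f j ω) = φ (⨆ j ∈ insert i S, f j ω) :=
    ae_eq_of_ae_le_of_lintegral_le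
      (ae_of_all _ fun ω => hφ_mono.monotone (biSup_mono (subset_insert i S))) hD_fin
      (hφ_meas.comp (Measurable.biSup _ (hS.insert i) fun j _ => hf j)).aemeasurable
      (hS_max _ (hS.insert i))
  filter_upwards [h_insert] with ω hω
  rw [hφ_mono.injective hω]
  exact le_biSup (fun j => f j ω) (mem_insert i S)

theorem exists_ae_least_upper_bound_general
    {Ω : Type*} [MeasurableSpace Ω] (μ : Measure Ω) [SigmaFinite μ]
    {I : Type*} (f : I → Ω → EReal) (hf : ∀ i, Measurable (f i)) :
    ∃ g : Ω → EReal, Measurable g ∧ (∀ i, ∀ᵐ ω ∂μ, f i ω ≤ g ω) ∧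
      ∀ h : Ω → EReal, Measurable h → (∀ i, ∀ᵐ ω ∂μ, f i ω ≤ h ω) →
        ∀ᵐ ω ∂μ, g ω ≤ h ω := by
  obtain ⟨ν, _, hμν, -⟩ := exists_isFiniteMeasure_absolutelyContinuous μ
  obtain ⟨S, hS, hS_ub⟩ := exists_countable_ae_le_biSup ν f hf
  refine ⟨fun ω => ⨆ j ∈ S, f j ω, Measurable.biSup _ hS fun j _ => hf j,
    fun i => hμν.ae_le (hS_ub i), fun h _ hh => ?_⟩
  filter_upwards [(ae_ball_iff hS).2 fun j _ => hh j] with ω hω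
  exact iSup₂_le hω

/-- **Essential supremum.** Every nonempty family of measurable `[-∞,∞]`-valued
functions on a σ-finite measure space has a measurable a.e. least upper bound. -/
theorem exists_ae_least_upper_bound
    {Ω : Type*} [MeasurableSpace Ω] (μ : Measure Ω) [SigmaFinite μ]
    {I : Type*} [Nonempty I] (f : I → Ω → EReal) (hf : ∀ i, Measurable (f i)) :
    ∃ g : Ω → EReal, Measurable g ∧ (∀ i, ∀ᵐ ω ∂μ, f i ω ≤ g ω) ∧
      ∀ h : Ω → EReal, Measurable h → (∀ i, ∀ᵐ ω ∂μ, f i ω ≤ h ω) →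
        ∀ᵐ ω ∂μ, g ω ≤ h ω :=
  exists_ae_least_upper_bound_general μ f hf
end
end

section
/- Every basic stable neighborhood of any x ∈ L⁰(X) contains a step function: for every x ∈ L⁰(X), every measurable r : Ω → (0,∞), every measurable n : Ω → ℕ and every sequence (yₘ)_{m∈ℕ} in L⁰(Y), there exists x̃ ∈ L⁰ₛ(X) such that for μ-a.e. ω one has |⟨x̃(ω) − x(ω), yₘ(ω)⟩| ≤ r(ω) for all natural numbers 1 ≤ m ≤ n(ω); that is, V(x; r, n, (yₘ)) ∩ L⁰ₛ(X) ≠ ∅. -/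
open MeasureTheory Filter Set Function Topology

noncomputable section

/-!
Separability of the range of a measurable version of `x` gives a sequence `(dᵢ)` dense in it.
Since `⟨·, y⟩` is continuous and only finitely many `yₘ(ω)` matter at each `ω`, every `ω` lies
in one of the measurable sets `Sᵢ` where `dᵢ` satisfies the neighborhood inequalities; taking
the value `dᵢ` on `Sᵢ \ ⋃_{j<i} Sⱼ` gives the step function.
-/

section Pairing

variable {X Y : Type*} [NormedAddCommGroup X] [NormedSpace ℝ X]
  [NormedAddCommGroup Y] [NormedSpace ℝ Y] {B : X →ₗ[ℝ] Y →ₗ[ℝ] ℝ}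

theorem continuous_pairing_of_abs_le (hB : ∀ (x : X) (y : Y), |B x y| ≤ ‖x‖ * ‖y‖) :
    Continuous fun p : X × Y => B p.1 p.2 :=
  (B.mkContinuous₂ 1 fun x y => by simpa using hB x y).isBoundedBilinearMap.continuous

theorem exists_mem_forall_abs_pairing_sub_lt (hB : Continuous fun p : X × Y => B p.1 p.2)
    {s : Set X} {x₀ : X} (hx₀ : x₀ ∈ closure s) {ι : Type*} (t : Finset ι) (y : ι → Y)
    {ε : ℝ} (hε : 0 < ε) : ∃ z ∈ s, ∀ i ∈ t, |B (z - x₀) (y i)| < ε := by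
  have hnear : ∀ᶠ z in 𝓝 x₀, ∀ i ∈ t, |B (z - x₀) (y i)| < ε := by
    refine (eventually_all_finset t).2 fun i _ => ?_
    have hcont : Continuous fun z => |B (z - x₀) (y i)| :=
      (hB.comp ((continuous_id.sub continuous_const).prodMk continuous_const)).abs
    exact hcont.continuousAt.eventually_lt continuousAt_const (by simpa using hε)
  exact (hnear.and_frequently (mem_closure_iff_frequently.1 hx₀)).exists.imp
    fun z hz => ⟨hz.2, hz.1⟩

theorem measurableSet_setOf_forall_abs_pairing_le {Ω : Type*} [MeasurableSpace Ω]
    (hB : Continuous fun p : X × Y => B p.1 p.2) {x : Ω → X} (hx : StronglyMeasurable x)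
    {ys : ℕ → Ω → Y} (hys : ∀ m, StronglyMeasurable (ys m)) {r : Ω → ℝ} (hr : Measurable r)
    {n : Ω → ℕ} (hn : Measurable n) :
    MeasurableSet {ω | ∀ m : ℕ, 1 ≤ m → m ≤ n ω → |B (x ω) (ys m ω)| ≤ r ω} := by
  refine Measurable.setOf (Measurable.forall fun m => ?_)
  have hpair : Measurable fun ω => |B (x ω) (ys m ω)| :=
    (hB.comp_stronglyMeasurable (hx.prodMk (hys m))).measurable.abs
  exact measurable_const.imp ((measurableSet_le measurable_const hn).mem.imp
    (measurableSet_le hpair hr).mem)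

end Pairing

theorem MeasureTheory.StronglyMeasurable.exists_seq_forall_mem_closure_range {Ω X : Type*}
    [MeasurableSpace Ω] [TopologicalSpace X] [Nonempty X] {f : Ω → X}
    (hf : StronglyMeasurable f) : ∃ d : ℕ → X, ∀ ω, f ω ∈ closure (range d) := by
  obtain ⟨c, hc, hfc⟩ := hf.isSeparable_range
  obtain ⟨d, hcd⟩ := countable_iff_exists_subset_range.1 hc
  exact ⟨d, fun ω => closure_mono hcd (hfc ⟨ω, rfl⟩)⟩

theorem exists_isStep_of_forall_exists_mem {Ω X : Type*} [MeasurableSpace Ω] (μ : Measure Ω)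
    {S : ℕ → Set Ω} (hS : ∀ i, MeasurableSet (S i)) (hcover : ∀ ω, ∃ i, ω ∈ S i)
    (d : ℕ → X) : ∃ xt : Ω → X, IsStep μ xt ∧ ∀ ω, ∃ i, ω ∈ S i ∧ xt ω = d i := by
  classical
  refine ⟨fun ω => d (Nat.find (hcover ω)), ⟨d, disjointed S, .disjointed hS,
    disjoint_disjointed S, ?_, ae_of_all _ fun ω k hk => ?_⟩,
    fun ω => ⟨_, Nat.find_spec (hcover ω), rfl⟩⟩
  · exact iUnion_disjointed.trans (eq_univ_of_forall fun ω => mem_iUnion.2 (hcover ω))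
  · rw [← preimage_find_eq_disjointed S hcover] at hk
    exact congrArg d hk

theorem nbhd_contains_step_general
    {Ω : Type*} [MeasurableSpace Ω] (μ : Measure Ω)
    {X Y : Type*} [NormedAddCommGroup X] [NormedSpace ℝ X]
    [NormedAddCommGroup Y] [NormedSpace ℝ Y]
    (B : X →ₗ[ℝ] Y →ₗ[ℝ] ℝ)
    (hB : ∀ (x : X) (y : Y), |B x y| ≤ ‖x‖ * ‖y‖)
    (x : Ω → X) (hx : AEStronglyMeasurable x μ)
    (r : Ω → ℝ) (hr : Measurable r) (hrpos : ∀ ω, 0 < r ω)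
    (n : Ω → ℕ) (hn : Measurable n)
    (ys : ℕ → Ω → Y) (hys : ∀ m, AEStronglyMeasurable (ys m) μ) :
    ∃ xt : Ω → X, IsStep μ xt ∧
      ∀ᵐ ω ∂μ, ∀ m : ℕ, 1 ≤ m → m ≤ n ω → |B (xt ω - x ω) (ys m ω)| ≤ r ω := by
  have hBc := continuous_pairing_of_abs_le hB
  obtain ⟨d, hd⟩ := hx.stronglyMeasurable_mk.exists_seq_forall_mem_closure_range
  let S : ℕ → Set Ω := fun i =>
    {ω | ∀ m : ℕ, 1 ≤ m → m ≤ n ω → |B (d i - hx.mk x ω) ((hys m).mk _ ω)| ≤ r ω}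
  have hS : ∀ i, MeasurableSet (S i) := fun i =>
    measurableSet_setOf_forall_abs_pairing_le hBc
      (stronglyMeasurable_const.sub hx.stronglyMeasurable_mk)
      (fun m => (hys m).stronglyMeasurable_mk) hr hn
  have hcover : ∀ ω, ∃ i, ω ∈ S i := fun ω => by
    obtain ⟨_, ⟨i, rfl⟩, hi⟩ := exists_mem_forall_abs_pairing_sub_lt hBc (hd ω)
      (Finset.Icc 1 (n ω)) (fun m => (hys m).mk _ ω) (hrpos ω)
    exact ⟨i, fun m h1 h2 => (hi m (Finset.mem_Icc.2 ⟨h1, h2⟩)).le⟩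
  obtain ⟨xt, hxt, hxtS⟩ := exists_isStep_of_forall_exists_mem μ hS hcover d
  refine ⟨xt, hxt, ?_⟩
  filter_upwards [hx.ae_eq_mk, ae_all_iff.2 fun m => (hys m).ae_eq_mk] with ω hxω hyω m h1 h2
  obtain ⟨i, hi, hxti⟩ := hxtS ω
  rw [hxti, hxω, hyω m]
  exact hi m h1 h2

/-- **Nonemptiness of `V ∩ L⁰ₛ(X)`.** Every basic stable neighborhood of every
`x ∈ L⁰(X)` contains a step function. -/
theorem nbhd_contains_step
    {Ω : Type*} [MeasurableSpace Ω] (μ : Measure Ω) [SigmaFinite μ]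
    {X Y : Type*} [NormedAddCommGroup X] [NormedSpace ℝ X] [CompleteSpace X]
    [NormedAddCommGroup Y] [NormedSpace ℝ Y] [CompleteSpace Y]
    (B : X →ₗ[ℝ] Y →ₗ[ℝ] ℝ)
    (hB : ∀ (x : X) (y : Y), |B x y| ≤ ‖x‖ * ‖y‖)
    (x : Ω → X) (hx : AEStronglyMeasurable x μ)
    (r : Ω → ℝ) (hr : Measurable r) (hrpos : ∀ ω, 0 < r ω)
    (n : Ω → ℕ) (hn : Measurable n)
    (ys : ℕ → Ω → Y) (hys : ∀ m, AEStronglyMeasurable (ys m) μ) :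
    ∃ xt : Ω → X, IsStep μ xt ∧
      ∀ᵐ ω ∂μ, ∀ m : ℕ, 1 ≤ m → m ≤ n ω → |B (xt ω - x ω) (ys m ω)| ≤ r ω :=
  nbhd_contains_step_general μ B hB x hx r hr hrpos n hn ys hys
end
end

section
/- Let L² = L²((0,1], ℬ, λ). For a countably-valued strongly measurable x̃ : (0,1] → L², x̃ = Σₖ xₖ 1_{Aₖ}, let id_s(x̃) denote the measurable real-valued function on (0,1] that agrees λ-a.e. on each Aₖ with (a representative of) xₖ. Then for every measurable r : (0,1] → (0,∞), every measurable n : (0,1] → ℕ, every sequence (yₘ)_{m∈ℕ} of strongly measurable functions (0,1] → L², and every real constant c > 0, there exists a countably-valued strongly measurable x̃ : (0,1] → L² such that for λ-a.e. ω one has |⟨x̃(ω), yₘ(ω)⟩_{L²}| ≤ r(ω) for all 1 ≤ m ≤ n(ω), and id_s(x̃)(ω) ≤ −c for λ-a.e. ω. (This shows that at the point 0 the identity map id : L² → L̄⁰ fails the σ_s-lower semi-continuity formula: the supremum over basic stable neighborhoods of 0 of the infimum of id_s over step functions in the neighborhood equals −∞, not id(0) = 0.) -/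
/-!
Let `g(ω) = ∑_{m ≤ n(ω)} ‖yₘ(ω)‖` and `ρ = r / (|c| g + 1)`. Cut `ℝ` into countably many
measurable pieces `A`, each of length `< ρ(ω)²` at each of its points `ω`: cut the level sets of
`J = ⌊ρ⁻²⌋₊` into intervals of length `1 / (J + 1)`. On the piece `A ∋ ω` take the value
`-c • 1_A ∈ L²`; its norm is `|c| √λ(A) ≤ |c| ρ(ω)`, so Cauchy–Schwarz gives
`|⟪-c • 1_A, yₘ(ω)⟫| ≤ |c| ρ(ω) g(ω) ≤ r(ω)`, while as a function it equals `-c` on `A`.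
-/

open MeasureTheory Filter Set Function Topology

noncomputable section

theorem exists_measurable_bound_norm_of_le {Ω E : Type*} [MeasurableSpace Ω]
    [NormedAddCommGroup E] {μ : Measure Ω} {f : ℕ → Ω → E}
    (hf : ∀ m, AEStronglyMeasurable (f m) μ) {n : Ω → ℕ} (hn : Measurable n) :
    ∃ g : Ω → ℝ, Measurable g ∧ (∀ ω, 0 ≤ g ω) ∧
      ∀ᵐ ω ∂μ, ∀ m ≤ n ω, ‖f m ω‖ ≤ g ω := by
  set G : Ω × ℕ → ℝ := fun p => ∑ m ∈ Finset.range (p.2 + 1), ‖(hf m).mk _ p.1‖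
  have hG : Measurable G := measurable_from_prod_countable_left fun j =>
    Finset.measurable_sum (Finset.range (j + 1)) fun m _ =>
      (hf m).stronglyMeasurable_mk.norm.measurable
  refine ⟨fun ω => G (ω, n ω), hG.comp (measurable_id.prodMk hn),
    fun ω => Finset.sum_nonneg fun m _ => norm_nonneg _, ?_⟩
  filter_upwards [ae_all_iff.2 fun m => (hf m).ae_eq_mk] with ω hω m hm
  rw [hω m]
  exact Finset.single_le_sum (f := fun m => ‖(hf m).mk _ ω‖) (fun _ _ => norm_nonneg _)
    (Finset.mem_range_succ_iff.2 hm)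

theorem volume_ceil_mul_preimage_le {s : ℝ} (hs : 0 < s) (z : ℤ) :
    volume {x : ℝ | ⌈x * s⌉ = z} ≤ ENNReal.ofReal s⁻¹ := by
  have hsub : {x : ℝ | ⌈x * s⌉ = z} ⊆ Ioc ((z - 1) / s) (z / s) := fun x hx => by
    obtain ⟨h₁, h₂⟩ := Int.ceil_eq_iff.1 hx
    exact ⟨(div_lt_iff₀ hs).2 h₁, (le_div_iff₀ hs).2 h₂⟩
  calc volume {x : ℝ | ⌈x * s⌉ = z} ≤ volume (Ioc ((z - 1) / s) (z / s)) := measure_mono hsub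
    _ = ENNReal.ofReal s⁻¹ := by rw [Real.volume_Ioc]; congr 1; field_simp; ring

def shortPieceIndex (ε : ℝ → ℝ) (ω : ℝ) : ℕ × ℤ :=
  (⌊(ε ω)⁻¹⌋₊, ⌈ω * (⌊(ε ω)⁻¹⌋₊ + 1)⌉)

theorem measurable_shortPieceIndex {ε : ℝ → ℝ} (hε : Measurable ε) :
    Measurable (shortPieceIndex ε) := by
  have hJ : Measurable fun ω => ⌊(ε ω)⁻¹⌋₊ := Nat.measurable_floor.comp hε.inv
  exact hJ.prodMk <| Int.measurable_ceil.comp <|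
    measurable_id.mul ((measurable_from_nat.comp hJ).add_const 1)

theorem measureReal_shortPieceIndex_preimage_lt {μ : Measure ℝ} (hμ : μ ≤ volume)
    {ε : ℝ → ℝ} {ω : ℝ} (hε : 0 < ε ω) :
    μ.real (shortPieceIndex ε ⁻¹' {shortPieceIndex ε ω}) < ε ω := by
  set s : ℝ := ⌊(ε ω)⁻¹⌋₊ + 1
  have hsub : shortPieceIndex ε ⁻¹' {shortPieceIndex ε ω} ⊆ {x | ⌈x * s⌉ = ⌈ω * s⌉} :=
    fun x hx => by
      simp only [shortPieceIndex, mem_preimage, mem_singleton_iff, Prod.mk.injEq] at hx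
      simp only [mem_ofPred_eq, s, ← hx.1, hx.2]
  refine ENNReal.toReal_lt_of_lt_ofReal ?_
  calc μ (shortPieceIndex ε ⁻¹' {shortPieceIndex ε ω})
      ≤ ENNReal.ofReal s⁻¹ :=
        (hμ _).trans <| (measure_mono hsub).trans (volume_ceil_mul_preimage_le (by positivity) _)
    _ < ENNReal.ofReal (ε ω) :=
        (ENNReal.ofReal_lt_ofReal_iff hε).2 (inv_lt_of_inv_lt₀ hε (Nat.lt_floor_add_one _))

theorem iUnion_preimage_singleton_equiv {α ι : Type*} (κ : α → ι) (e : ℕ ≃ ι) :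
    ⋃ k, κ ⁻¹' {e k} = univ := by
  rw [← preimage_iUnion, e.surjective.iUnion_comp fun p => ({p} : Set ι),
    iUnion_singleton_eq_range, range_id', preimage_univ]

theorem abs_inner_indicatorConstLp_two_le {α : Type*} [MeasurableSpace α] {μ : Measure α}
    {s : Set α} (hs : MeasurableSet s) (hμs : μ s ≠ ⊤) (a : ℝ) (y : Lp ℝ 2 μ) :
    |inner ℝ (indicatorConstLp 2 hs hμs a) y| ≤ |a| * √(μ.real s) * ‖y‖ := by
  refine (abs_real_inner_le_norm _ _).trans_eq ?_
  rw [norm_indicatorConstLp two_ne_zero ENNReal.ofNat_ne_top, Real.sqrt_eq_rpow,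
    Real.norm_eq_abs]
  norm_num

theorem mul_div_add_one_mul_le {a r g : ℝ} (ha : 0 ≤ a) (hr : 0 ≤ r) (hg : 0 ≤ g) :
    a * (r / (a * g + 1)) * g ≤ r := by
  have hag : 0 ≤ a * g := mul_nonneg ha hg
  calc a * (r / (a * g + 1)) * g = r * (a * g / (a * g + 1)) := by ring
    _ ≤ r * 1 := by gcongr; exact div_le_one_of_le₀ (by linarith) (by linarith)
    _ = r := mul_one r

theorem L2_identity_not_sigmaS_lsc_general
    (r : ℝ → ℝ) (hr : Measurable r) (hrpos : ∀ ω, 0 < r ω)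
    (n : ℝ → ℕ) (hn : Measurable n)
    (ys : ℕ → ℝ → Lp ℝ 2 (volume.restrict (Set.Ioc (0:ℝ) 1)))
    (hys : ∀ m, AEStronglyMeasurable (ys m) (volume.restrict (Set.Ioc (0:ℝ) 1)))
    (c : ℝ) :
    ∃ (xt : ℝ → Lp ℝ 2 (volume.restrict (Set.Ioc (0:ℝ) 1)))
      (xs : ℕ → Lp ℝ 2 (volume.restrict (Set.Ioc (0:ℝ) 1))) (A : ℕ → Set ℝ),
      (∀ k, MeasurableSet (A k)) ∧ Pairwise (Disjoint on A) ∧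
      (⋃ k, A k) = Set.univ ∧
      (∀ᵐ ω ∂(volume.restrict (Set.Ioc (0:ℝ) 1)), ∀ k, ω ∈ A k → xt ω = xs k) ∧
      (∀ᵐ ω ∂(volume.restrict (Set.Ioc (0:ℝ) 1)), ∀ m : ℕ, 1 ≤ m → m ≤ n ω →
        |(inner ℝ (xt ω) (ys m ω) : ℝ)| ≤ r ω) ∧
      (∀ k, ∀ᵐ ω ∂((volume.restrict (Set.Ioc (0:ℝ) 1)).restrict (A k)),
        ((xs k : ℝ → ℝ) ω : ℝ) ≤ -c) := by
  obtain ⟨g, hg, hg_nonneg, hys_le⟩ := exists_measurable_bound_norm_of_le hys hn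
  set ρ : ℝ → ℝ := fun ω => r ω / (|c| * g ω + 1)
  have hρ_pos ω : 0 < ρ ω := div_pos (hrpos ω) (by have := hg_nonneg ω; positivity)
  set κ := shortPieceIndex (ρ · ^ 2)
  have hκ : Measurable κ :=
    measurable_shortPieceIndex ((hr.div ((hg.const_mul _).add_const 1)).pow_const 2)
  have hκ_fiber (p : ℕ × ℤ) : MeasurableSet (κ ⁻¹' {p}) := hκ (measurableSet_singleton p)
  have hκ_small ω : √((volume.restrict (Ioc (0:ℝ) 1)).real (κ ⁻¹' {κ ω})) ≤ ρ ω :=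
    Real.sqrt_le_iff.2 ⟨(hρ_pos ω).le, (measureReal_shortPieceIndex_preimage_lt (ε := (ρ · ^ 2))
      Measure.restrict_le_self (pow_pos (hρ_pos ω) 2)).le⟩
  let x (p : ℕ × ℤ) : Lp ℝ 2 (volume.restrict (Ioc (0:ℝ) 1)) :=
    indicatorConstLp 2 (hκ_fiber p) (measure_ne_top _ _) (-c)
  let e : ℕ ≃ ℕ × ℤ := (Denumerable.eqv (ℕ × ℤ)).symm
  refine ⟨fun ω => x (κ ω), fun k => x (e k), fun k => κ ⁻¹' {e k}, fun k => hκ_fiber (e k),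
    (pairwise_disjoint_fiber κ).comp_of_injective e.injective,
    iUnion_preimage_singleton_equiv κ e, ae_of_all _ fun ω k hk => congrArg x hk, ?_, fun k => ?_⟩
  · filter_upwards [hys_le] with ω hω m _ hm
    have hρω := (hρ_pos ω).le
    calc |inner ℝ (x (κ ω)) (ys m ω)|
        ≤ |-c| * √((volume.restrict (Ioc (0:ℝ) 1)).real (κ ⁻¹' {κ ω})) * ‖ys m ω‖ :=
          abs_inner_indicatorConstLp_two_le _ _ _ _
      _ ≤ |c| * ρ ω * g ω := by rw [abs_neg]; gcongr; exacts [hκ_small ω, hω m hm]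
      _ ≤ r ω := mul_div_add_one_mul_le (abs_nonneg c) (hrpos ω).le (hg_nonneg ω)
  · filter_upwards [ae_restrict_of_ae (indicatorConstLp_coeFn (c := -c) (hs := hκ_fiber (e k))),
      ae_restrict_mem (hκ_fiber (e k))] with ω hx hω
    rw [hx, indicator_of_mem hω]

/-- **Failure of σ_s-lower semi-continuity of the identity on `L²` (Remark 2.5).**
Every basic stable neighborhood of `0 ∈ L⁰(L²)` contains a step function
`xt = Σₖ xₖ 1_{Aₖ}` whose diagonal `id_s(xt)` is `≤ -c` a.e. (for any prescribed
constant `c > 0`). -/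
theorem L2_identity_not_sigmaS_lsc
    (r : ℝ → ℝ) (hr : Measurable r) (hrpos : ∀ ω, 0 < r ω)
    (n : ℝ → ℕ) (hn : Measurable n)
    (ys : ℕ → ℝ → Lp ℝ 2 (volume.restrict (Set.Ioc (0:ℝ) 1)))
    (hys : ∀ m, AEStronglyMeasurable (ys m) (volume.restrict (Set.Ioc (0:ℝ) 1)))
    (c : ℝ) (hc : 0 < c) :
    ∃ (xt : ℝ → Lp ℝ 2 (volume.restrict (Set.Ioc (0:ℝ) 1)))
      (xs : ℕ → Lp ℝ 2 (volume.restrict (Set.Ioc (0:ℝ) 1))) (A : ℕ → Set ℝ),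
      (∀ k, MeasurableSet (A k)) ∧ Pairwise (Disjoint on A) ∧
      (⋃ k, A k) = Set.univ ∧
      (∀ᵐ ω ∂(volume.restrict (Set.Ioc (0:ℝ) 1)), ∀ k, ω ∈ A k → xt ω = xs k) ∧
      (∀ᵐ ω ∂(volume.restrict (Set.Ioc (0:ℝ) 1)), ∀ m : ℕ, 1 ≤ m → m ≤ n ω →
        |(inner ℝ (xt ω) (ys m ω) : ℝ)| ≤ r ω) ∧
      (∀ k, ∀ᵐ ω ∂((volume.restrict (Set.Ioc (0:ℝ) 1)).restrict (A k)),
        ((xs k : ℝ → ℝ) ω : ℝ) ≤ -c) :=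
  L2_identity_not_sigmaS_lsc_general r hr hrpos n hn ys hys c
end
end
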